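/- Let h : X₁^OTW → X₂^OTW be a conjugacy between OTW-subshifts. Then h restricts to a bijection X₁ → X₂ between the underlying subshifts, and the map h̄ : 𝒰₁ → 𝒰₂ given by h̄(A) = h(A) is an isomorphism of Boolean algebras. -/

import Mathlib

open Set

section Subshift

variable {A : Type*}

/-- The word `w` occurs as a block of `x` at position `i`. -/
def IsBlockAt (x : ℕ → A) (w : List A) (i : ℕ) : Prop :=
  ∀ j, ∀ _ : j < w.length, x (i + j) = w[j]

/-- The subshift `X_F ⊆ 𝒜^ℕ` determined by the set `F` of forbidden words. -/
def SubshiftOf (F : Set (List A)) : Set (ℕ → A) :=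
  {x | ∀ w ∈ F, ∀ i, ¬ IsBlockAt x w i}

/-- The language of the subshift: all finite words occurring in some element of `X_F`. -/
def Lang (F : Set (List A)) : Set (List A) :=
  {w | ∃ x ∈ SubshiftOf F, ∃ i, IsBlockAt x w i}

/-- Concatenation of a finite word with an infinite sequence. -/
def wcat (w : List A) (x : ℕ → A) : ℕ → A := fun n =>
  if h : n < w.length then w[n] else x (n - w.length)

/-- `C(α,β) = {β x ∈ X : α x ∈ X}`. -/
def Cset (F : Set (List A)) (α β : List A) : Set (ℕ → A) :=
  {y | ∃ x : ℕ → A, y = wcat β x ∧ wcat β x ∈ SubshiftOf F ∧ wcat α x ∈ SubshiftOf F}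

/-- The cylinder set `Z_β = C(ω,β)`. -/
def Zcyl (F : Set (List A)) (β : List A) : Set (ℕ → A) := Cset F [] β

/-- The follower set `F_α = C(α,ω)`. -/
def Fol (F : Set (List A)) (α : List A) : Set (ℕ → A) := Cset F α []

/-- The relative range `r(S,w) = {x ∈ X : w x ∈ S}`. -/
def relRange (F : Set (List A)) (S : Set (ℕ → A)) (w : List A) : Set (ℕ → A) :=
  {x | x ∈ SubshiftOf F ∧ wcat w x ∈ S}

/-- Membership in the Boolean algebra `𝒰` of subsets of `X` generated by the sets
`C(α,β)`, `α, β ∈ L_X`: closed under finite unions, finite intersections and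
complements in `X`. -/
inductive InU (F : Set (List A)) : Set (ℕ → A) → Prop
  | base {α β : List A} (hα : α ∈ Lang F) (hβ : β ∈ Lang F) : InU F (Cset F α β)
  | union {S T : Set (ℕ → A)} : InU F S → InU F T → InU F (S ∪ T)
  | inter {S T : Set (ℕ → A)} : InU F S → InU F T → InU F (S ∩ T)
  | compl {S : Set (ℕ → A)} : InU F S → InU F (SubshiftOf F \ S)

/-- `αβ⁻¹` is in reduced form in the free group on the alphabet:
`α` and `β` do not end in the same letter. -/
def ReducedPair (α β : List A) : Prop :=
  ¬ ∃ c : A, α.getLast? = some c ∧ β.getLast? = some c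

/-- Ultrafilters (= prime filters) of the Boolean algebra `𝒰`. -/
structure UltraU (F : Set (List A)) where
  sets : Set (Set (ℕ → A))
  mem_inU : ∀ S ∈ sets, InU F S
  nonempty : sets.Nonempty
  empty_not_mem : ∅ ∉ sets
  inter_mem : ∀ S ∈ sets, ∀ T ∈ sets, S ∩ T ∈ sets
  superset_mem : ∀ S ∈ sets, ∀ T : Set (ℕ → A), InU F T → S ⊆ T → T ∈ sets
  prime : ∀ S T : Set (ℕ → A), InU F S → InU F T → S ∪ T ∈ sets → S ∈ sets ∨ T ∈ sets

/-- The basic (compact) open set `O_S = {ξ ∈ 𝒰̂ : S ∈ ξ}` of the Stone dual `𝒰̂`. -/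
def Oset (F : Set (List A)) (S : Set (ℕ → A)) : Set (UltraU F) := {ξ | S ∈ ξ.sets}

/-- The Stone topology on `𝒰̂`. -/
instance (F : Set (List A)) : TopologicalSpace (UltraU F) :=
  TopologicalSpace.generateFrom {V | ∃ S : Set (ℕ → A), InU F S ∧ V = Oset F S}

/-- The graph of the partially defined map `σ̂` on `𝒰̂`:
`sigmaHatRel F ξ η` holds iff `ξ ∈ dom σ̂` and `η = σ̂(ξ)`. -/
def sigmaHatRel (F : Set (List A)) (ξ η : UltraU F) : Prop :=
  ∃ a : A, Zcyl F [a] ∈ ξ.sets ∧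
    η.sets = {B : Set (ℕ → A) | InU F B ∧ ∃ S ∈ ξ.sets, relRange F S [a] ⊆ B}

/- The OTW subshift, modelled inside `ℕ → Option A`; a finite word corresponds to a
sequence that is eventually `none` (`none` playing the role of the symbol `∞`). -/

/-- The shift map, deleting the first letter (it sends sequences of length `≤ 1`
to the empty sequence). -/
def shiftO (y : ℕ → Option A) : ℕ → Option A := fun i => y (i + 1)

/-- An infinite sequence, as an element of the OTW model. -/
def ofSeq (x : ℕ → A) : ℕ → Option A := fun i => some (x i)

/-- A finite word, as an element of the OTW model. -/
def ofWord (w : List A) : ℕ → Option A := fun i =>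
  if h : i < w.length then some w[i] else none

/-- Concatenation of a finite word with an element of the OTW model. -/
def wcatO (w : List A) (y : ℕ → Option A) : ℕ → Option A := fun n =>
  if h : n < w.length then some w[n] else y (n - w.length)

/-- The finite words belonging to `X^fin`: those `w` for which there are infinitely many
letters `a` such that `w a y ∈ X^inf` for some `y`. -/
def XFin (F : Set (List A)) : Set (List A) :=
  {w | {a : A | ∃ y : ℕ → A, wcat (w ++ [a]) y ∈ SubshiftOf F}.Infinite}

/-- The OTW subshift `X^OTW = X^inf ∪ X^fin`. -/
def OTW (F : Set (List A)) : Set (ℕ → Option A) :=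
  ofSeq '' SubshiftOf F ∪ ofWord '' XFin F

theorem ofSeq_mem_OTW {F : Set (List A)} {x : ℕ → A} (hx : x ∈ SubshiftOf F) :
    ofSeq x ∈ OTW F := Or.inl ⟨x, hx, rfl⟩

theorem ofWord_mem_OTW {F : Set (List A)} {w : List A} (hw : w ∈ XFin F) :
    ofWord w ∈ OTW F := Or.inr ⟨w, hw, rfl⟩

/-- The generalised cylinder `𝒵(w,F') = {y ∈ X^OTW : y` begins with `w`, and the next
letter of `y` is not in `F'}`. -/
def genCyl (F : Set (List A)) (w : List A) (F' : Set A) : Set (ℕ → Option A) :=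
  {y | y ∈ OTW F ∧ (∀ j, ∀ _ : j < w.length, y j = some w[j]) ∧
    ∀ a ∈ F', y w.length ≠ some a}

/-- The follower set `ℱ(w) = {y ∈ X^OTW : w y ∈ X^OTW}` in the OTW subshift. -/
def folO (F : Set (List A)) (w : List A) : Set (ℕ → Option A) :=
  {y | y ∈ OTW F ∧ wcatO w y ∈ OTW F}

/-- The topology on `X^OTW`, generated by the generalised cylinders. -/
instance (F : Set (List A)) : TopologicalSpace ↥(OTW F) :=
  TopologicalSpace.generateFrom
    {V | ∃ w ∈ Lang F, ∃ F' : Set A, F'.Finite ∧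
      V = {y : ↥(OTW F) | (y : ℕ → Option A) ∈ genCyl F w F'}}

/-- The graph of the map `π : 𝒰̂ → X^OTW`: `piRel F ξ y` holds iff `π(ξ) = y`.
(`y` begins with a nonempty word `w` iff `Z_w ∈ ξ`.) -/
def piRel (F : Set (List A)) (ξ : UltraU F) (y : ℕ → Option A) : Prop :=
  (∀ i, y i = none → y (i + 1) = none) ∧
  ∀ w : List A, w ≠ [] →
    ((∀ j, ∀ _ : j < w.length, y j = some w[j]) ↔ Zcyl F w ∈ ξ.sets)

end Subshift

section Conjugacy

variable {A₁ A₂ : Type*}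

/-- `h` commutes with the shift maps. -/
def ShiftCommuting (F₁ : Set (List A₁)) (F₂ : Set (List A₂))
    (h : ↥(OTW F₁) → ↥(OTW F₂)) : Prop :=
  ∀ (y : ↥(OTW F₁)) (hy : shiftO (y : ℕ → Option A₁) ∈ OTW F₁),
    (h ⟨shiftO (y : ℕ → Option A₁), hy⟩ : ℕ → Option A₂) =
      shiftO ((h y : ℕ → Option A₂))

/-- `h` is length-preserving: `h y` and `y` have the same length, i.e. the same
positions where the symbol `∞` (here `none`) occurs. -/
def LengthPreserving (F₁ : Set (List A₁)) (F₂ : Set (List A₂))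
    (h : ↥(OTW F₁) → ↥(OTW F₂)) : Prop :=
  ∀ (y : ↥(OTW F₁)) (i : ℕ),
    ((h y : ℕ → Option A₂) i = none ↔ (y : ℕ → Option A₁) i = none)

/-- A conjugacy of OTW subshifts: a homeomorphism commuting with the shifts and
preserving lengths. -/
def IsConjugacy (F₁ : Set (List A₁)) (F₂ : Set (List A₂))
    (h : ↥(OTW F₁) ≃ₜ ↥(OTW F₂)) : Prop :=
  ShiftCommuting F₁ F₂ ⇑h ∧ LengthPreserving F₁ F₂ ⇑h

/-- The image `h̄(S) = h(S)` of a subset `S ⊆ X₁` under (the restriction to `X₁` of)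
a map `h : X₁^OTW → X₂^OTW`. -/
def hbar (F₁ : Set (List A₁)) (F₂ : Set (List A₂))
    (h : ↥(OTW F₁) → ↥(OTW F₂)) (S : Set (ℕ → A₁)) : Set (ℕ → A₂) :=
  {z | ∃ y : ↥(OTW F₁), (y : ℕ → Option A₁) ∈ ofSeq '' S ∧
    ofSeq z = (h y : ℕ → Option A₂)}

end Conjugacy


/-!
A length-preserving `h` sends infinite sequences to infinite sequences, so it restricts to a
bijection `e : X₁ ≃ X₂` commuting with the shift, and `h̄ S = e(S)`; images under a bijection
respect unions, intersections and complements. What remains is that `h̄` maps the generators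
into `𝒰₂`. Since `σ^|β|(βx) = x = σ^|α|(αx)`,
`h̄ C(α,β) = h̄ Z_β ∩ σ^{-|β|}(σ^|α|(h̄ Z_α))`.
The space `X^OTW` is compact and `𝒵(β,∅)` is clopen, so `h(𝒵(β,∅))` is compact open and hence
a finite union of generalised cylinders `𝒵(w,G)` with `|w| ≥ |β|`. For such pieces the
right-hand side is an explicit Boolean combination of sets `C(·,·)`.
-/

section Words

variable {A : Type*}

def StartsWith (w : List A) (x : ℕ → A) : Prop :=
  ∀ j, ∀ _ : j < w.length, x j = w[j]

def dropSeq (n : ℕ) (x : ℕ → A) : ℕ → A := fun i => x (n + i)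

@[simp]
lemma dropSeq_apply (n : ℕ) (x : ℕ → A) (i : ℕ) : dropSeq n x i = x (n + i) := rfl

@[simp]
lemma dropSeq_zero (x : ℕ → A) : dropSeq 0 x = x := by
  funext i; simp

lemma dropSeq_dropSeq (n m : ℕ) (x : ℕ → A) :
    dropSeq m (dropSeq n x) = dropSeq (n + m) x := by
  funext i; simp [Nat.add_assoc]

lemma wcat_of_lt (w : List A) (x : ℕ → A) {n : ℕ} (h : n < w.length) :
    wcat w x n = w[n] := by
  simp [wcat, h]

lemma wcat_of_le (w : List A) (x : ℕ → A) {n : ℕ} (h : w.length ≤ n) :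
    wcat w x n = x (n - w.length) := by
  simp [wcat, Nat.not_lt.mpr h]

@[simp]
lemma wcat_nil (x : ℕ → A) : wcat [] x = x := by
  funext i; simp [wcat]

@[simp]
lemma dropSeq_length_wcat (w : List A) (x : ℕ → A) : dropSeq w.length (wcat w x) = x := by
  funext i; simp [wcat_of_le]

lemma startsWith_wcat (w : List A) (x : ℕ → A) : StartsWith w (wcat w x) :=
  fun _ hj => wcat_of_lt w x hj

lemma StartsWith.wcat_dropSeq {w : List A} {x : ℕ → A} (h : StartsWith w x) :
    wcat w (dropSeq w.length x) = x := by
  funext i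
  rcases lt_or_ge i w.length with hi | hi
  · rw [wcat_of_lt w _ hi, h i hi]
  · rw [wcat_of_le w _ hi, dropSeq_apply, Nat.add_sub_cancel' hi]

lemma startsWith_append {u v : List A} {x : ℕ → A} :
    StartsWith (u ++ v) x ↔ StartsWith u x ∧ StartsWith v (dropSeq u.length x) := by
  refine ⟨fun h => ⟨fun j hj => ?_, fun j hj => ?_⟩, fun ⟨hu, hv⟩ j hj => ?_⟩
  · rw [h j (by simp; omega), List.getElem_append_left hj]
  · rw [dropSeq_apply, h _ (by simp; omega), List.getElem_append_right (by omega)]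
    simp
  · rcases lt_or_ge j u.length with hju | hju
    · rw [hu j hju, List.getElem_append_left hju]
    · have := hv (j - u.length) (by simp at hj; omega)
      rw [dropSeq_apply, Nat.add_sub_cancel' hju] at this
      rw [this, List.getElem_append_right hju]

lemma startsWith_concat {w : List A} {a : A} {x : ℕ → A} :
    StartsWith (w ++ [a]) x ↔ StartsWith w x ∧ x w.length = a := by
  rw [startsWith_append]
  refine and_congr_right fun _ => ⟨fun h => by simpa using h 0 (by simp), fun h j hj => ?_⟩
  obtain rfl : j = 0 := by simpa using hj
  simpa using h

lemma dropSeq_one_wcat_cons (c : A) (w : List A) (x : ℕ → A) :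
    dropSeq 1 (wcat (c :: w) x) = wcat w x := by
  funext i
  rcases lt_or_ge i w.length with hi | hi
  · rw [dropSeq_apply, wcat_of_lt _ _ (by simp; omega), wcat_of_lt _ _ hi]
    simp [Nat.add_comm]
  · rw [dropSeq_apply, wcat_of_le _ _ (by simp; omega), wcat_of_le _ _ hi]
    congr 1; simp; omega

end Words

section Subshift

variable {A : Type*} {F : Set (List A)}

lemma dropSeq_mem_subshiftOf {x : ℕ → A} (hx : x ∈ SubshiftOf F) (n : ℕ) :
    dropSeq n x ∈ SubshiftOf F := fun u hu i hblock =>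
  hx u hu (n + i) fun j hj => by simpa [Nat.add_assoc] using hblock j hj

lemma mem_lang_of_startsWith {w : List A} {x : ℕ → A} (hx : x ∈ SubshiftOf F)
    (h : StartsWith w x) : w ∈ Lang F :=
  ⟨x, hx, 0, fun j hj => by simpa using h j hj⟩

lemma nil_mem_lang {x : ℕ → A} (hx : x ∈ SubshiftOf F) : ([] : List A) ∈ Lang F :=
  mem_lang_of_startsWith hx fun _ hj => absurd hj (Nat.not_lt_zero _)

lemma mem_Cset_iff {α β : List A} {z : ℕ → A} :
    z ∈ Cset F α β ↔
      z ∈ SubshiftOf F ∧ StartsWith β z ∧ wcat α (dropSeq β.length z) ∈ SubshiftOf F := by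
  constructor
  · rintro ⟨x, rfl, hβ, hα⟩
    exact ⟨hβ, startsWith_wcat β x, by rwa [dropSeq_length_wcat]⟩
  · rintro ⟨hz, hβ, hα⟩
    exact ⟨dropSeq β.length z, hβ.wcat_dropSeq.symm, by rwa [hβ.wcat_dropSeq], hα⟩

lemma mem_Zcyl_iff {w : List A} {z : ℕ → A} :
    z ∈ Zcyl F w ↔ z ∈ SubshiftOf F ∧ StartsWith w z := by
  simp only [Zcyl, mem_Cset_iff, wcat_nil]
  exact ⟨fun h => ⟨h.1, h.2.1⟩, fun h => ⟨h.1, h.2, dropSeq_mem_subshiftOf h.1 _⟩⟩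

/-- The trace `𝒵(w,G) ∩ X^inf` of a generalised cylinder on the subshift. -/
def genCylInf (F : Set (List A)) (w : List A) (G : Set A) : Set (ℕ → A) :=
  {x | x ∈ SubshiftOf F ∧ StartsWith w x ∧ x w.length ∉ G}

lemma genCylInf_empty (w : List A) : genCylInf F w ∅ = Zcyl F w := by
  ext z
  simp [genCylInf, mem_Zcyl_iff]

lemma Zcyl_nil : Zcyl F [] = SubshiftOf F := by
  ext z
  simp [mem_Zcyl_iff, StartsWith]

lemma InU.subset_subshiftOf {S : Set (ℕ → A)} (hS : InU F S) : S ⊆ SubshiftOf F := by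
  induction hS with
  | base => exact fun _ hz => (mem_Cset_iff.mp hz).1
  | union _ _ ih₁ ih₂ => exact union_subset ih₁ ih₂
  | inter _ _ ih₁ _ => exact inter_subset_left.trans ih₁
  | compl => exact sdiff_subset

lemma inU_subshiftOf (hnil : [] ∈ Lang F) : InU F (SubshiftOf F) := by
  rw [← Zcyl_nil]
  exact InU.base hnil hnil

lemma inU_empty (hnil : [] ∈ Lang F) : InU F (∅ : Set (ℕ → A)) := by
  simpa using (inU_subshiftOf hnil).compl

lemma inU_cset (hnil : [] ∈ Lang F) (α β : List A) : InU F (Cset F α β) := by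
  by_cases hαβ : α ∈ Lang F ∧ β ∈ Lang F
  · exact InU.base hαβ.1 hαβ.2
  · convert inU_empty hnil
    refine eq_empty_of_forall_notMem fun z hz => hαβ ?_
    obtain ⟨hz, hβ, hα⟩ := mem_Cset_iff.mp hz
    exact ⟨mem_lang_of_startsWith hα (startsWith_wcat _ _), mem_lang_of_startsWith hz hβ⟩

lemma inU_biUnion (hnil : [] ∈ Lang F) {ι : Type*} {s : Set ι} (hs : s.Finite)
    {g : ι → Set (ℕ → A)} (hg : ∀ i ∈ s, InU F (g i)) : InU F (⋃ i ∈ s, g i) := by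
  induction s, hs using Set.Finite.induction_on with
  | empty => simpa using inU_empty hnil
  | insert _ _ ih =>
    rw [biUnion_insert]
    exact (hg _ (mem_insert _ _)).union (ih fun i hi => hg i (mem_insert_of_mem _ hi))

lemma inU_genCylInf (hnil : [] ∈ Lang F) (w : List A) {G : Set A} (hG : G.Finite) :
    InU F (genCylInf F w G) := by
  have : genCylInf F w G = Zcyl F w ∩ (SubshiftOf F \ ⋃ a ∈ G, Zcyl F (w ++ [a])) := by
    ext z
    simp only [genCylInf, mem_ofPred_eq, mem_inter_iff, mem_sdiff, mem_iUnion, mem_Zcyl_iff,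
      startsWith_concat, not_exists]
    constructor
    · rintro ⟨hz, hw, hG⟩
      exact ⟨⟨hz, hw⟩, hz, fun a ha h => hG (h.2.2 ▸ ha)⟩
    · rintro ⟨⟨hz, hw⟩, -, hG⟩
      exact ⟨hz, hw, fun ha => hG _ ha ⟨hz, hw, rfl⟩⟩
  rw [this]
  exact (inU_cset hnil [] w).inter
    (InU.compl (inU_biUnion hnil hG fun a _ => inU_cset hnil [] (w ++ [a])))

end Subshift

section GenCylUnion

variable {A : Type*} {F : Set (List A)}

lemma genCylInf_inter_preimage_image (w₁ w₂ v₁ v₂ : List A) (G H : Set A) :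
    genCylInf F (w₁ ++ w₂) G ∩
        dropSeq w₁.length ⁻¹' (dropSeq v₁.length '' genCylInf F (v₁ ++ v₂) H) =
      Cset F v₁ w₁ ∩ genCylInf F (w₁ ++ w₂) G ∩ genCylInf F (w₁ ++ v₂) H := by
  ext z
  simp only [genCylInf, mem_inter_iff, mem_preimage, mem_image, mem_Cset_iff, mem_ofPred_eq,
    startsWith_append, List.length_append]
  constructor
  · rintro ⟨hz, z', ⟨hz'X, ⟨hv₁, hv₂⟩, hz'H⟩, hzz'⟩
    refine ⟨⟨⟨hz.1, hz.2.1.1, ?_⟩, hz⟩, hz.1, ⟨hz.2.1.1, hzz' ▸ hv₂⟩, ?_⟩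
    · rwa [← hzz', hv₁.wcat_dropSeq]
    · have := congrFun hzz' v₂.length
      simp only [dropSeq_apply] at this
      rwa [← this]
  · rintro ⟨⟨⟨-, -, hX⟩, hz⟩, -, ⟨-, hv₂⟩, hH⟩
    refine ⟨hz, wcat v₁ (dropSeq w₁.length z), ⟨hX, ⟨startsWith_wcat _ _, ?_⟩, ?_⟩, ?_⟩
    · rwa [dropSeq_length_wcat]
    · rwa [wcat_of_le _ _ (by omega), dropSeq_apply, Nat.add_sub_cancel_left]
    · exact dropSeq_length_wcat _ _

def IsGenCylUnion (F : Set (List A)) (n : ℕ) (P : Set (ℕ → A)) : Prop :=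
  ∃ s : Set (List A × Set A), s.Finite ∧ (∀ p ∈ s, p.2.Finite ∧ n ≤ p.1.length) ∧
    P = ⋃ p ∈ s, genCylInf F p.1 p.2

lemma IsGenCylUnion.inU_inter_preimage_image (hnil : [] ∈ Lang F) {n m : ℕ}
    {P Q : Set (ℕ → A)} (hP : IsGenCylUnion F n P) (hQ : IsGenCylUnion F m Q) :
    InU F (P ∩ dropSeq n ⁻¹' (dropSeq m '' Q)) := by
  obtain ⟨s, hs, hsn, rfl⟩ := hP
  obtain ⟨t, ht, htm, rfl⟩ := hQ
  simp only [image_iUnion₂, preimage_iUnion₂, inter_iUnion₂, iUnion₂_inter]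
  refine inU_biUnion hnil ht fun q hq => inU_biUnion hnil hs fun p hp => ?_
  rcases p with ⟨w, G⟩
  rcases q with ⟨v, H⟩
  obtain ⟨hG, hw⟩ := hsn _ hp
  obtain ⟨hH, hv⟩ := htm _ hq
  obtain ⟨w₁, w₂, rfl, rfl⟩ : ∃ w₁ w₂, w = w₁ ++ w₂ ∧ w₁.length = n :=
    ⟨w.take n, w.drop n, (List.take_append_drop n w).symm, List.length_take_of_le hw⟩
  obtain ⟨v₁, v₂, rfl, rfl⟩ : ∃ v₁ v₂, v = v₁ ++ v₂ ∧ v₁.length = m :=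
    ⟨v.take m, v.drop m, (List.take_append_drop m v).symm, List.length_take_of_le hv⟩
  rw [genCylInf_inter_preimage_image]
  exact ((inU_cset hnil _ _).inter (inU_genCylInf hnil _ hG)).inter (inU_genCylInf hnil _ hH)

end GenCylUnion

section OTWPoints

variable {A : Type*} {F : Set (List A)}

lemma ofSeq_injective : Function.Injective (ofSeq : (ℕ → A) → ℕ → Option A) :=
  fun _ _ h => funext fun i => Option.some.inj (congrFun h i)

lemma ofWord_apply (w : List A) (i : ℕ) : ofWord w i = w[i]? := by
  unfold ofWord
  split_ifs with h <;> simp [h]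

lemma ofWord_injective : Function.Injective (ofWord : List A → ℕ → Option A) :=
  fun w v h => List.ext_getElem? fun i => by rw [← ofWord_apply, ← ofWord_apply, h]

lemma ofSeq_ne_ofWord (x : ℕ → A) (w : List A) : ofSeq x ≠ ofWord w := fun h => by
  simpa [ofSeq, ofWord_apply] using congrFun h w.length

lemma ofSeq_mem_OTW_iff {x : ℕ → A} : ofSeq x ∈ OTW F ↔ x ∈ SubshiftOf F := by
  refine ⟨?_, ofSeq_mem_OTW⟩
  rintro (⟨x', hx', hxx'⟩ | ⟨w, -, hw⟩)
  · rwa [← ofSeq_injective hxx']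
  · exact absurd hw.symm (ofSeq_ne_ofWord x w)

lemma ofWord_mem_OTW_iff {w : List A} : ofWord w ∈ OTW F ↔ w ∈ XFin F := by
  refine ⟨?_, ofWord_mem_OTW⟩
  rintro (⟨x, -, hx⟩ | ⟨w', hw', hww'⟩)
  · exact absurd hx (ofSeq_ne_ofWord x w)
  · rwa [← ofWord_injective hww']

lemma exists_wcat_mem_of_mem_XFin {w : List A} (hw : w ∈ XFin F) :
    ∃ t, wcat w t ∈ SubshiftOf F := by
  obtain ⟨a, t, ht⟩ := hw.nonempty
  have hstart := (startsWith_append.mp (startsWith_wcat (w ++ [a]) t)).1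
  exact ⟨_, hstart.wcat_dropSeq ▸ ht⟩

lemma eq_none_of_mem_OTW {y : ℕ → Option A} (hy : y ∈ OTW F) {i j : ℕ} (hi : y i = none)
    (hij : i ≤ j) : y j = none := by
  rcases hy with ⟨x, -, rfl⟩ | ⟨w, -, rfl⟩
  · simp [ofSeq] at hi
  · rw [ofWord_apply, List.getElem?_eq_none_iff] at hi ⊢
    omega

lemma mem_image_ofSeq_iff {y : ℕ → Option A} (hy : y ∈ OTW F) :
    y ∈ ofSeq '' SubshiftOf F ↔ ∀ i, y i ≠ none := by
  refine ⟨fun ⟨x, _, hx⟩ i => by simp [← hx, ofSeq], fun h => ?_⟩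
  rcases hy with hy | ⟨w, -, rfl⟩
  · exact hy
  · exact absurd (ofWord_apply w w.length) (by simpa using h w.length)

lemma exists_mem_subshiftOf_isBlockAt {y : ℕ → Option A} (hy : y ∈ OTW F) {u : List A}
    {i : ℕ} (hb : ∀ j, ∀ _ : j < u.length, y (i + j) = some u[j]) :
    ∃ x ∈ SubshiftOf F, IsBlockAt x u i := by
  rcases hy with ⟨x, hx, rfl⟩ | ⟨w, hw, rfl⟩
  · exact ⟨x, hx, fun j hj => Option.some.inj (hb j hj)⟩
  · obtain ⟨t, ht⟩ := exists_wcat_mem_of_mem_XFin hw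
    refine ⟨wcat w t, ht, fun j hj => ?_⟩
    have := hb j hj
    rw [ofWord_apply, List.getElem?_eq_some_iff] at this
    obtain ⟨hlt, hw⟩ := this
    rw [wcat_of_lt w t hlt, hw]

lemma exists_wcat_mem_of_prefix {y : ℕ → Option A} (hy : y ∈ OTW F) {u : List A}
    (hu : ∀ j, ∀ _ : j < u.length, y j = some u[j]) : ∃ t, wcat u t ∈ SubshiftOf F := by
  obtain ⟨x, hx, hblock⟩ := exists_mem_subshiftOf_isBlockAt hy (i := 0) (by simpa using hu)
  have hstart : StartsWith u x := fun j hj => by simpa using hblock j hj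
  exact ⟨_, hstart.wcat_dropSeq ▸ hx⟩

lemma eq_ofWord_of_prefix {y : ℕ → Option A} {w : List A}
    (hw : ∀ j, ∀ _ : j < w.length, y j = some w[j]) (hnone : ∀ j, w.length ≤ j → y j = none) :
    y = ofWord w := by
  funext i
  rw [ofWord_apply]
  rcases lt_or_ge i w.length with hi | hi
  · rw [hw i hi, List.getElem?_eq_getElem hi]
  · rw [hnone i hi, List.getElem?_eq_none hi]

lemma exists_prefix_of_ne_none {y : ℕ → Option A} {n : ℕ} (h : ∀ j < n, y j ≠ none) :
    ∃ w : List A, w.length = n ∧ ∀ j, ∀ _ : j < w.length, y j = some w[j] := by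
  induction n with
  | zero => exact ⟨[], rfl, by simp⟩
  | succ n ih =>
    obtain ⟨w, rfl, hw⟩ := ih fun j hj => h j (by omega)
    obtain ⟨a, ha⟩ := Option.ne_none_iff_exists'.mp (h w.length (by omega))
    refine ⟨w ++ [a], by simp, fun j hj => ?_⟩
    rcases lt_or_ge j w.length with hjw | hjw
    · rw [hw j hjw, List.getElem_append_left hjw]
    · obtain rfl : j = w.length := by simp at hj; omega
      simpa using ha

lemma exists_eq_ofSeq_or_eq_ofWord {y : ℕ → Option A}
    (hy : ∀ i j, y i = none → i ≤ j → y j = none) :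
    (∃ x, y = ofSeq x) ∨ ∃ w, y = ofWord w := by
  classical
  by_cases hall : ∃ i, y i = none
  · obtain ⟨w, hlen, hw⟩ := exists_prefix_of_ne_none fun j hj => Nat.find_min hall hj
    exact Or.inr ⟨w, eq_ofWord_of_prefix hw fun j hj =>
      hy _ j (Nat.find_spec hall) (hlen ▸ hj)⟩
  · push Not at hall
    choose x hx using fun i => Option.ne_none_iff_exists'.mp (hall i)
    exact Or.inl ⟨x, funext hx⟩

lemma shiftO_ofSeq (x : ℕ → A) : shiftO (ofSeq x) = ofSeq (dropSeq 1 x) := by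
  funext i
  simp [shiftO, ofSeq, Nat.add_comm]

lemma shiftO_ofWord (w : List A) : shiftO (ofWord w) = ofWord w.tail := by
  funext i
  simp [shiftO, ofWord_apply]

lemma tail_mem_XFin {w : List A} (hw : w ∈ XFin F) : w.tail ∈ XFin F := by
  refine hw.mono fun a (ha : ∃ t, _) => ?_
  obtain ⟨t, ht⟩ := ha
  cases w with
  | nil => exact ⟨t, ht⟩
  | cons c w =>
    exact ⟨t, dropSeq_one_wcat_cons c (w ++ [a]) t ▸ dropSeq_mem_subshiftOf ht 1⟩

lemma shiftO_mem_OTW {y : ℕ → Option A} (hy : y ∈ OTW F) : shiftO y ∈ OTW F := by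
  rcases hy with ⟨x, hx, rfl⟩ | ⟨w, hw, rfl⟩
  · exact shiftO_ofSeq x ▸ ofSeq_mem_OTW (dropSeq_mem_subshiftOf hx 1)
  · exact shiftO_ofWord w ▸ ofWord_mem_OTW (tail_mem_XFin hw)

def shiftOTW (F : Set (List A)) (y : OTW F) : OTW F := ⟨shiftO y, shiftO_mem_OTW y.2⟩

def toOTW (F : Set (List A)) (x : SubshiftOf F) : OTW F := ⟨ofSeq x, ofSeq_mem_OTW x.2⟩

lemma toOTW_injective : Function.Injective (toOTW F) :=
  fun _ _ h => Subtype.ext (ofSeq_injective (congrArg Subtype.val h))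

lemma mem_range_toOTW_iff {y : OTW F} :
    y ∈ range (toOTW F) ↔ (y : ℕ → Option A) ∈ ofSeq '' SubshiftOf F :=
  ⟨fun ⟨x, hx⟩ => ⟨x, x.2, congrArg Subtype.val hx⟩,
    fun ⟨x, hx, hxy⟩ => ⟨⟨x, hx⟩, Subtype.ext hxy⟩⟩

lemma toOTW_dropSeq (x : SubshiftOf F) (n : ℕ) :
    toOTW F ⟨dropSeq n x, dropSeq_mem_subshiftOf x.2 n⟩ = (shiftOTW F)^[n] (toOTW F x) := by
  induction n with
  | zero => simp only [dropSeq_zero, Function.iterate_zero_apply]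
  | succ n ih =>
    rw [Function.iterate_succ_apply', ← ih]
    exact Subtype.ext (by simp only [toOTW, shiftOTW, shiftO_ofSeq, dropSeq_dropSeq])

end OTWPoints

section Topology

variable {A : Type*} {F : Set (List A)}

def otwCyl (F : Set (List A)) (w : List A) (G : Set A) : Set (OTW F) :=
  {y | (y : ℕ → Option A) ∈ genCyl F w G}

lemma mem_otwCyl_iff {w : List A} {G : Set A} {y : OTW F} :
    y ∈ otwCyl F w G ↔ (∀ j, ∀ _ : j < w.length, (y : ℕ → Option A) j = some w[j]) ∧
      ∀ a ∈ G, (y : ℕ → Option A) w.length ≠ some a :=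
  ⟨fun h => h.2, fun h => ⟨y.2, h⟩⟩

lemma isOpen_otwCyl (w : List A) {G : Set A} (hG : G.Finite) : IsOpen (otwCyl F w G) := by
  by_cases hw : w ∈ Lang F
  · exact TopologicalSpace.GenerateOpen.basic _ ⟨w, hw, G, hG, rfl⟩
  · convert isOpen_empty
    refine eq_empty_of_forall_notMem fun y hy => hw ?_
    obtain ⟨x, hx, hblock⟩ :=
      exists_mem_subshiftOf_isBlockAt y.2 (i := 0) (by simpa using (mem_otwCyl_iff.mp hy).1)
    exact ⟨x, hx, 0, hblock⟩

lemma isClosed_otwCyl_empty (w : List A) : IsClosed (otwCyl F w ∅) := by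
  classical
  have : (otwCyl F w ∅)ᶜ = ⋃ k : Fin w.length, otwCyl F (w.take k) {w[k]} := by
    ext y
    simp only [mem_compl_iff, mem_iUnion, mem_otwCyl_iff, mem_empty_iff_false,
      mem_singleton_iff, forall_eq, List.length_take, List.getElem_take, IsEmpty.forall_iff,
      implies_true, and_true]
    constructor
    · intro hy
      have hex : ∃ j, ∃ _ : j < w.length, (y : ℕ → Option A) j ≠ some w[j] := by
        simpa using hy
      obtain ⟨hk, hne⟩ := Nat.find_spec hex
      refine ⟨⟨Nat.find hex, hk⟩, fun j hj => ?_, by simpa [Nat.min_eq_left hk.le] using hne⟩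
      by_contra hne'
      exact Nat.find_min hex (lt_of_lt_of_le hj (min_le_left _ _)) ⟨by omega, hne'⟩
    · rintro ⟨k, -, hne⟩ hw
      exact hne (by simpa [Nat.min_eq_left k.2.le] using hw k k.2)
  rw [← isOpen_compl_iff, this]
  exact isOpen_iUnion fun k => isOpen_otwCyl _ (finite_singleton _)

lemma otwCyl_subset_of_length_lt {w₁ w₂ : List A} {G₁ G₂ : Set A} {z : OTW F}
    (h₁ : z ∈ otwCyl F w₁ G₁) (h₂ : z ∈ otwCyl F w₂ G₂) (hlt : w₁.length < w₂.length) :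
    otwCyl F w₂ G₂ ⊆ otwCyl F w₁ G₁ := by
  rw [mem_otwCyl_iff] at h₁ h₂
  intro y hy
  rw [mem_otwCyl_iff] at hy ⊢
  refine ⟨fun j hj => ?_, fun a ha => ?_⟩
  · rw [hy.1 j (by omega), ← h₂.1 j (by omega), h₁.1 j hj]
  · rw [hy.1 _ hlt, ← h₂.1 _ hlt]
    exact h₁.2 a ha

lemma eq_of_mem_otwCyl {w₁ w₂ : List A} {G₁ G₂ : Set A} {z : OTW F}
    (h₁ : z ∈ otwCyl F w₁ G₁) (h₂ : z ∈ otwCyl F w₂ G₂) (hlen : w₁.length = w₂.length) :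
    w₁ = w₂ :=
  List.ext_getElem hlen fun j hj₁ hj₂ => Option.some.inj <| by
    rw [← (mem_otwCyl_iff.mp h₁).1 j hj₁, (mem_otwCyl_iff.mp h₂).1 j hj₂]

lemma exists_otwCyl_subset {O : Set (OTW F)} (hO : IsOpen O) {z : OTW F} (hz : z ∈ O) :
    ∃ w G, G.Finite ∧ z ∈ otwCyl F w G ∧ otwCyl F w G ⊆ O := by
  induction hO generalizing z with
  | basic V hV =>
    obtain ⟨w, -, G, hG, rfl⟩ := hV
    exact ⟨w, G, hG, hz, subset_rfl⟩
  | univ =>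
    exact ⟨[], ∅, finite_empty, mem_otwCyl_iff.mpr ⟨by simp, by simp⟩, subset_univ _⟩
  | inter O₁ O₂ _ _ ih₁ ih₂ =>
    obtain ⟨w₁, G₁, hG₁, hz₁, hsub₁⟩ := ih₁ hz.1
    obtain ⟨w₂, G₂, hG₂, hz₂, hsub₂⟩ := ih₂ hz.2
    rcases lt_trichotomy w₁.length w₂.length with hlt | heq | hlt
    · exact ⟨w₂, G₂, hG₂, hz₂, fun y hy =>
        ⟨hsub₁ (otwCyl_subset_of_length_lt hz₁ hz₂ hlt hy), hsub₂ hy⟩⟩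
    · obtain rfl := eq_of_mem_otwCyl hz₁ hz₂ heq
      refine ⟨w₁, G₁ ∪ G₂, hG₁.union hG₂, ?_, fun y hy => ⟨hsub₁ ?_, hsub₂ ?_⟩⟩
      · rw [mem_otwCyl_iff] at hz₁ hz₂ ⊢
        exact ⟨hz₁.1, fun a ha => ha.elim (hz₁.2 a) (hz₂.2 a)⟩
      · exact ⟨y.2, (mem_otwCyl_iff.mp hy).1, fun a ha => hy.2.2 a (Or.inl ha)⟩
      · exact ⟨y.2, (mem_otwCyl_iff.mp hy).1, fun a ha => hy.2.2 a (Or.inr ha)⟩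
    · exact ⟨w₁, G₁, hG₁, hz₁, fun y hy =>
        ⟨hsub₁ hy, hsub₂ (otwCyl_subset_of_length_lt hz₂ hz₁ hlt hy)⟩⟩
  | sUnion S _ ih =>
    obtain ⟨O, hOS, hzO⟩ := hz
    obtain ⟨w, G, hG, hzw, hsub⟩ := ih O hOS hzO
    exact ⟨w, G, hG, hzw, hsub.trans (subset_sUnion_of_mem hOS)⟩

lemma exists_deep_otwCyl_subset {O : Set (OTW F)} (hO : IsOpen O) {z : OTW F} (hz : z ∈ O)
    {n : ℕ} (hlen : ∀ j < n, (z : ℕ → Option A) j ≠ none) :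
    ∃ w G, G.Finite ∧ n ≤ w.length ∧ z ∈ otwCyl F w G ∧ otwCyl F w G ⊆ O := by
  obtain ⟨w, G, hG, hzw, hsub⟩ := exists_otwCyl_subset hO hz
  rcases le_or_gt n w.length with hn | hn
  · exact ⟨w, G, hG, hn, hzw, hsub⟩
  obtain ⟨v, rfl, hv⟩ := exists_prefix_of_ne_none hlen
  have hzv : z ∈ otwCyl F v ∅ := mem_otwCyl_iff.mpr ⟨hv, by simp⟩
  exact ⟨v, ∅, finite_empty, le_rfl, hzv,
    (otwCyl_subset_of_length_lt hzw hzv hn).trans hsub⟩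

end Topology

section Compactness

variable {A : Type*} {F : Set (List A)}

open Classical in
noncomputable def ultraCoord (f : Ultrafilter (OTW F)) (i : ℕ) : Option A :=
  if h : ∃ a, {y : OTW F | (y : ℕ → Option A) i = some a} ∈ f then some h.choose else none

lemma ultraCoord_eq_some_iff (f : Ultrafilter (OTW F)) {i : ℕ} {a : A} :
    ultraCoord f i = some a ↔ {y : OTW F | (y : ℕ → Option A) i = some a} ∈ f := by
  unfold ultraCoord
  split_ifs with h
  · refine ⟨fun ha => Option.some.inj ha ▸ h.choose_spec, fun ha => ?_⟩
    obtain ⟨y, hy₁, hy₂⟩ := f.nonempty_of_mem (Filter.inter_mem h.choose_spec ha)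
    exact hy₁.symm.trans hy₂
  · exact ⟨fun h' => absurd h' (by simp), fun ha => absurd ⟨a, ha⟩ h⟩

open Classical in
/-- The limit point of `f`: its coordinates, as long as they are all determined. -/
noncomputable def ultraLimit (f : Ultrafilter (OTW F)) (i : ℕ) : Option A :=
  if ∀ j < i, ultraCoord f j ≠ none then ultraCoord f i else none

lemma ultraLimit_eq_some_iff (f : Ultrafilter (OTW F)) {i : ℕ}
    (hpre : ∀ j < i, ultraLimit f j ≠ none) {a : A} :
    ultraLimit f i = some a ↔ {y : OTW F | (y : ℕ → Option A) i = some a} ∈ f := by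
  have hcoord : ∀ j < i, ultraCoord f j ≠ none := fun j hj h =>
    hpre j hj (by unfold ultraLimit; split_ifs <;> simp [h])
  rw [ultraLimit, if_pos hcoord, ultraCoord_eq_some_iff]

lemma ultraLimit_eq_none_of_le (f : Ultrafilter (OTW F)) {i j : ℕ}
    (hi : ultraLimit f i = none) (hij : i ≤ j) : ultraLimit f j = none := by
  rcases eq_or_lt_of_le hij with rfl | hlt
  · exact hi
  rw [ultraLimit, if_neg]
  intro hj
  rw [ultraLimit, if_pos fun k hk => hj k (hk.trans hlt)] at hi
  exact hj i hlt hi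

lemma otwCyl_mem_ultrafilter (f : Ultrafilter (OTW F)) {w : List A} {G : Set A}
    (hG : G.Finite) (hw : ∀ j, ∀ _ : j < w.length, ultraLimit f j = some w[j])
    (hwG : ∀ a ∈ G, ultraLimit f w.length ≠ some a) : otwCyl F w G ∈ f := by
  have hpre : ∀ j ≤ w.length, ∀ k < j, ultraLimit f k ≠ none := fun j hj k hk => by
    simp [hw k (by omega)]
  have h₁ : (⋂ j ∈ Iio w.length,
      {y : OTW F | (y : ℕ → Option A) j = ultraLimit f j}) ∈ f := by
    refine (Filter.biInter_mem (finite_Iio _)).mpr fun j hj => ?_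
    rw [hw j hj]
    exact (ultraLimit_eq_some_iff f (hpre j (le_of_lt hj))).mp (hw j hj)
  have h₂ : (⋂ a ∈ G, {y : OTW F | (y : ℕ → Option A) w.length = some a}ᶜ) ∈ f :=
    (Filter.biInter_mem hG).mpr fun a ha => Ultrafilter.compl_mem_iff_notMem.mpr fun h =>
      hwG a ha ((ultraLimit_eq_some_iff f (hpre _ le_rfl)).mpr h)
  filter_upwards [h₁, h₂] with y hy₁ hy₂
  simp only [mem_iInter, mem_Iio, mem_compl_iff, mem_ofPred_eq] at hy₁ hy₂
  exact mem_otwCyl_iff.mpr ⟨fun j hj => (hy₁ j hj).trans (hw j hj), hy₂⟩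

lemma ultraLimit_mem_OTW (f : Ultrafilter (OTW F)) : ultraLimit f ∈ OTW F := by
  rcases exists_eq_ofSeq_or_eq_ofWord (y := ultraLimit f)
    (fun _ _ => ultraLimit_eq_none_of_le f) with ⟨x, hx⟩ | ⟨w, hw⟩
  · rw [hx]
    refine ofSeq_mem_OTW fun u hu i hblock => ?_
    have hmem : (⋂ j ∈ Iio u.length,
        {y : OTW F | (y : ℕ → Option A) (i + j) = some (x (i + j))}) ∈ f :=
      (Filter.biInter_mem (finite_Iio _)).mpr fun j _ =>
        (ultraLimit_eq_some_iff f fun k _ => by simp [hx, ofSeq]).mp (by rw [hx]; rfl)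
    obtain ⟨y, hy⟩ := f.nonempty_of_mem hmem
    simp only [mem_iInter, mem_Iio, mem_ofPred_eq] at hy
    obtain ⟨x', hx', hblock'⟩ := exists_mem_subshiftOf_isBlockAt y.2 (u := u) (i := i)
      fun j hj => by rw [hy j hj, hblock j hj]
    exact hx' u hu i hblock'
  · rw [hw]
    refine ofWord_mem_OTW (by_contra fun hfin => ?_)
    -- With `E` the finite set of letters extending `w`, the cylinder `𝒵(w,E)` is `f`-large,
    -- yet none of its points is `w` itself or an extension of `w`.
    obtain ⟨y, hy⟩ := f.nonempty_of_mem (otwCyl_mem_ultrafilter f (not_infinite.mp hfin)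
      (fun j hj => by rw [hw, ofWord_apply, List.getElem?_eq_getElem hj])
      (fun a _ => by simp [hw, ofWord_apply]))
    obtain ⟨hyw, hyE⟩ := mem_otwCyl_iff.mp hy
    cases hb : (y : ℕ → Option A) w.length with
    | none =>
      have := eq_ofWord_of_prefix hyw fun j hj => eq_none_of_mem_OTW y.2 hb hj
      exact hfin (ofWord_mem_OTW_iff.mp (this ▸ y.2))
    | some b =>
      refine hyE b (exists_wcat_mem_of_prefix y.2 fun j hj => ?_) hb
      rcases lt_or_ge j w.length with hjw | hjw
      · rw [hyw j hjw, List.getElem_append_left hjw]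
      · obtain rfl : j = w.length := by simp at hj; omega
        simpa using hb

instance OTW.compactSpace : CompactSpace (OTW F) :=
  ⟨isCompact_iff_ultrafilter_le_nhds'.mpr fun f _ =>
    ⟨⟨ultraLimit f, ultraLimit_mem_OTW f⟩, mem_univ _, by
      rw [TopologicalSpace.nhds_generateFrom]
      refine le_iInf₂ fun V ⟨hV, w, _, G, hG, hVw⟩ => ?_
      subst hVw
      exact Filter.le_principal_iff.mpr (otwCyl_mem_ultrafilter f hG hV.2.1 hV.2.2)⟩⟩

end Compactness

section CompactOpen

variable {A : Type*} {F : Set (List A)}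

lemma IsCompact.exists_finite_otwCyl_cover {K : Set (OTW F)} (hK : IsCompact K)
    (hKo : IsOpen K) {n : ℕ} (hlen : ∀ y ∈ K, ∀ j < n, (y : ℕ → Option A) j ≠ none) :
    ∃ s : Set (List A × Set A), s.Finite ∧ (∀ p ∈ s, p.2.Finite ∧ n ≤ p.1.length) ∧
      K = ⋃ p ∈ s, otwCyl F p.1 p.2 := by
  obtain ⟨s, hsb, hs, hKs⟩ := hK.elim_finite_subcover_image
    (b := {p : List A × Set A | p.2.Finite ∧ n ≤ p.1.length ∧ otwCyl F p.1 p.2 ⊆ K})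
    (c := fun p => otwCyl F p.1 p.2) (fun p hp => isOpen_otwCyl _ hp.1) fun z hz => by
      obtain ⟨w, G, hG, hn, hzw, hsub⟩ := exists_deep_otwCyl_subset hKo hz (hlen z hz)
      exact mem_biUnion (x := (w, G)) ⟨hG, hn, hsub⟩ hzw
  exact ⟨s, hs, fun p hp => ⟨(hsb hp).1, (hsb hp).2.1⟩,
    hKs.antisymm (iUnion₂_subset fun p hp => (hsb hp).2.2)⟩

def infTrace (F : Set (List A)) (K : Set (OTW F)) : Set (ℕ → A) :=
  Subtype.val '' (toOTW F ⁻¹' K)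

lemma infTrace_otwCyl (w : List A) (G : Set A) : infTrace F (otwCyl F w G) = genCylInf F w G := by
  ext z
  simp only [infTrace, toOTW, genCylInf, mem_image, mem_preimage, mem_otwCyl_iff, ofSeq,
    Option.some.injEq, Subtype.exists, exists_and_right, exists_eq_right, mem_ofPred_eq]
  exact ⟨fun ⟨⟨hz, hw⟩, hG⟩ => ⟨hz, hw, fun hzG => hG _ hzG rfl⟩,
    fun ⟨hz, hw, hG⟩ => ⟨⟨hz, hw⟩, fun a ha h => hG (Option.some.inj h ▸ ha)⟩⟩

lemma IsCompact.isGenCylUnion_infTrace {K : Set (OTW F)} (hK : IsCompact K) (hKo : IsOpen K)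
    {n : ℕ} (hlen : ∀ y ∈ K, ∀ j < n, (y : ℕ → Option A) j ≠ none) :
    IsGenCylUnion F n (infTrace F K) := by
  obtain ⟨s, hs, hsn, rfl⟩ := hK.exists_finite_otwCyl_cover hKo hlen
  refine ⟨s, hs, hsn, ?_⟩
  simp only [← infTrace_otwCyl, infTrace, preimage_iUnion₂, image_iUnion₂]

end CompactOpen

namespace IsConjugacy

variable {A₁ A₂ : Type*} {F₁ : Set (List A₁)} {F₂ : Set (List A₂)} {h : OTW F₁ ≃ₜ OTW F₂}

lemma semiconj (hconj : IsConjugacy F₁ F₂ h) :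
    Function.Semiconj h (shiftOTW F₁) (shiftOTW F₂) :=
  fun y => Subtype.ext (hconj.1 y (shiftO_mem_OTW y.2))

protected lemma symm (hconj : IsConjugacy F₁ F₂ h) : IsConjugacy F₂ F₁ h.symm :=
  ⟨fun y _ => congrArg Subtype.val
      (hconj.semiconj.inverse_left h.symm_apply_apply h.apply_symm_apply y),
    fun y i => by rw [← hconj.2 (h.symm y) i, h.apply_symm_apply]⟩

lemma apply_mem_image_ofSeq_iff (hconj : IsConjugacy F₁ F₂ h) (y : OTW F₁) :
    (h y : ℕ → Option A₂) ∈ ofSeq '' SubshiftOf F₂ ↔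
      (y : ℕ → Option A₁) ∈ ofSeq '' SubshiftOf F₁ := by
  rw [mem_image_ofSeq_iff y.2, mem_image_ofSeq_iff (h y).2]
  exact forall_congr' fun i => not_congr (hconj.2 y i)

noncomputable def subshiftEquiv (hconj : IsConjugacy F₁ F₂ h) :
    SubshiftOf F₁ ≃ SubshiftOf F₂ :=
  (Equiv.ofInjective _ toOTW_injective).trans <|
    (h.toEquiv.subtypeEquiv fun y => by
      rw [mem_range_toOTW_iff, mem_range_toOTW_iff]
      exact (hconj.apply_mem_image_ofSeq_iff y).symm).trans
    (Equiv.ofInjective _ toOTW_injective).symm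

lemma toOTW_subshiftEquiv (hconj : IsConjugacy F₁ F₂ h) (x : SubshiftOf F₁) :
    toOTW F₂ (hconj.subshiftEquiv x) = h (toOTW F₁ x) :=
  Equiv.apply_ofInjective_symm toOTW_injective _

lemma toOTW_subshiftEquiv_symm (hconj : IsConjugacy F₁ F₂ h) (x : SubshiftOf F₂) :
    toOTW F₁ (hconj.subshiftEquiv.symm x) = h.symm (toOTW F₂ x) := by
  rw [h.eq_symm_apply, ← hconj.toOTW_subshiftEquiv, Equiv.apply_symm_apply]

lemma subshiftEquiv_symm (hconj : IsConjugacy F₁ F₂ h) :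
    hconj.symm.subshiftEquiv = hconj.subshiftEquiv.symm :=
  Equiv.ext fun x => toOTW_injective <| by
    rw [hconj.symm.toOTW_subshiftEquiv, toOTW_subshiftEquiv_symm]

lemma subshiftEquiv_dropSeq (hconj : IsConjugacy F₁ F₂ h) (x : SubshiftOf F₁) (n : ℕ) :
    (hconj.subshiftEquiv ⟨dropSeq n x, dropSeq_mem_subshiftOf x.2 n⟩ : ℕ → A₂) =
      dropSeq n (hconj.subshiftEquiv x) := by
  show _ = ((⟨_, dropSeq_mem_subshiftOf (hconj.subshiftEquiv x).2 n⟩ : SubshiftOf F₂) : ℕ → A₂)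
  refine congrArg Subtype.val (toOTW_injective ?_)
  rw [toOTW_subshiftEquiv, toOTW_dropSeq, toOTW_dropSeq, (hconj.semiconj.iterate_right n).eq,
    toOTW_subshiftEquiv]

lemma hbar_eq_image (hconj : IsConjugacy F₁ F₂ h) (S : Set (ℕ → A₁)) :
    hbar F₁ F₂ h S = (Subtype.val ∘ hconj.subshiftEquiv) '' (Subtype.val ⁻¹' S) := by
  ext z
  constructor
  · rintro ⟨y, ⟨s, hs, hsy⟩, hz⟩
    have hsX : s ∈ SubshiftOf F₁ := ofSeq_mem_OTW_iff.mp (hsy ▸ y.2)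
    have hy : toOTW F₁ ⟨s, hsX⟩ = y := Subtype.ext hsy
    refine ⟨⟨s, hsX⟩, hs, ofSeq_injective ?_⟩
    rw [hz, ← hy, ← toOTW_subshiftEquiv]
    rfl
  · rintro ⟨x, hx, rfl⟩
    exact ⟨toOTW F₁ x, ⟨x, hx, rfl⟩, congrArg Subtype.val (hconj.toOTW_subshiftEquiv x)⟩

lemma hbar_union (hconj : IsConjugacy F₁ F₂ h) (S T : Set (ℕ → A₁)) :
    hbar F₁ F₂ h (S ∪ T) = hbar F₁ F₂ h S ∪ hbar F₁ F₂ h T := by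
  simp only [hconj.hbar_eq_image, preimage_union, image_union]

lemma hbar_inter (hconj : IsConjugacy F₁ F₂ h) (S T : Set (ℕ → A₁)) :
    hbar F₁ F₂ h (S ∩ T) = hbar F₁ F₂ h S ∩ hbar F₁ F₂ h T := by
  simp only [hconj.hbar_eq_image, preimage_inter,
    image_inter (Subtype.val_injective.comp hconj.subshiftEquiv.injective)]

lemma hbar_diff (hconj : IsConjugacy F₁ F₂ h) (S : Set (ℕ → A₁)) :
    hbar F₁ F₂ h (SubshiftOf F₁ \ S) = SubshiftOf F₂ \ hbar F₁ F₂ h S := by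
  simp only [hconj.hbar_eq_image, preimage_sdiff, Subtype.coe_preimage_self, ← compl_eq_univ_sdiff,
    image_compl_eq_range_sdiff_image (Subtype.val_injective.comp hconj.subshiftEquiv.injective),
    EquivLike.range_comp, Subtype.range_coe]

lemma hbar_hbar_symm (hconj : IsConjugacy F₁ F₂ h) {T : Set (ℕ → A₂)}
    (hT : T ⊆ SubshiftOf F₂) : hbar F₁ F₂ h (hbar F₂ F₁ h.symm T) = T := by
  rw [hconj.hbar_eq_image, hconj.symm.hbar_eq_image, hconj.subshiftEquiv_symm,
    image_comp Subtype.val hconj.subshiftEquiv.symm, preimage_image_eq _ Subtype.val_injective,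
    image_comp, Equiv.image_symm_image, Subtype.image_preimage_coe, inter_eq_right.mpr hT]

lemma hbar_injOn (hconj : IsConjugacy F₁ F₂ h) :
    InjOn (hbar F₁ F₂ h) {S | S ⊆ SubshiftOf F₁} := fun S hS S' hS' heq => by
  rw [hconj.hbar_eq_image, hconj.hbar_eq_image] at heq
  have := image_injective.mpr (Subtype.val_injective.comp hconj.subshiftEquiv.injective) heq
  rwa [Subtype.preimage_coe_eq_preimage_coe_iff, inter_eq_right.mpr hS,
    inter_eq_right.mpr hS'] at this

lemma hbar_infTrace (hconj : IsConjugacy F₁ F₂ h) (K : Set (OTW F₁)) :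
    hbar F₁ F₂ h (infTrace F₁ K) = infTrace F₂ (h '' K) := by
  rw [hconj.hbar_eq_image, infTrace, infTrace, preimage_image_eq _ Subtype.val_injective,
    image_comp, Equiv.image_eq_preimage_symm, h.image_eq_preimage_symm]
  congr 1
  ext x
  simp only [mem_preimage, toOTW_subshiftEquiv_symm]

lemma hbar_Cset (hconj : IsConjugacy F₁ F₂ h) (α β : List A₁) :
    hbar F₁ F₂ h (Cset F₁ α β) = hbar F₁ F₂ h (Zcyl F₁ β) ∩
      dropSeq β.length ⁻¹' (dropSeq α.length '' hbar F₁ F₂ h (Zcyl F₁ α)) := by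
  simp only [hconj.hbar_eq_image]
  ext z
  simp only [mem_inter_iff, mem_preimage, mem_image, Function.comp_apply]
  constructor
  · rintro ⟨x, hx, rfl⟩
    obtain ⟨hxX, hβ, hα⟩ := mem_Cset_iff.mp hx
    let x' : SubshiftOf F₁ := ⟨wcat α (dropSeq β.length x), hα⟩
    refine ⟨⟨x, mem_Zcyl_iff.mpr ⟨hxX, hβ⟩, rfl⟩, hconj.subshiftEquiv x',
      ⟨x', mem_Zcyl_iff.mpr ⟨hα, startsWith_wcat _ _⟩, rfl⟩, ?_⟩
    rw [← subshiftEquiv_dropSeq, ← subshiftEquiv_dropSeq]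
    simp only [x', dropSeq_length_wcat]
  · rintro ⟨⟨x, hx, rfl⟩, _, ⟨x', hx', rfl⟩, hxx'⟩
    refine ⟨x, mem_Cset_iff.mpr ⟨x.2, (mem_Zcyl_iff.mp hx).2, ?_⟩, rfl⟩
    rw [← subshiftEquiv_dropSeq, ← subshiftEquiv_dropSeq] at hxx'
    have hshift : dropSeq α.length (x' : ℕ → A₁) = dropSeq β.length x :=
      congrArg Subtype.val (hconj.subshiftEquiv.injective (Subtype.ext hxx'))
    rw [← hshift, (mem_Zcyl_iff.mp hx').2.wcat_dropSeq]
    exact x'.2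

lemma isGenCylUnion_hbar_Zcyl (hconj : IsConjugacy F₁ F₂ h) (β : List A₁) :
    IsGenCylUnion F₂ β.length (hbar F₁ F₂ h (Zcyl F₁ β)) := by
  rw [← genCylInf_empty, ← infTrace_otwCyl, hconj.hbar_infTrace]
  refine ((isClosed_otwCyl_empty β).isCompact.image h.continuous).isGenCylUnion_infTrace
    (h.isOpenMap _ (isOpen_otwCyl β finite_empty)) ?_
  rintro _ ⟨y, hy, rfl⟩ j hj hnone
  rw [hconj.2 y j, (mem_otwCyl_iff.mp hy).1 j hj] at hnone
  exact Option.some_ne_none _ hnone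

lemma inU_hbar (hconj : IsConjugacy F₁ F₂ h) {S : Set (ℕ → A₁)} (hS : InU F₁ S) :
    InU F₂ (hbar F₁ F₂ h S) := by
  induction hS with
  | @base α β hα =>
    obtain ⟨x, hx, -⟩ := hα
    rw [hconj.hbar_Cset]
    exact (hconj.isGenCylUnion_hbar_Zcyl β).inU_inter_preimage_image
      (nil_mem_lang (hconj.subshiftEquiv ⟨x, hx⟩).2) (hconj.isGenCylUnion_hbar_Zcyl α)
  | union _ _ ih₁ ih₂ => exact hconj.hbar_union _ _ ▸ ih₁.union ih₂
  | inter _ _ ih₁ ih₂ => exact hconj.hbar_inter _ _ ▸ ih₁.inter ih₂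
  | compl _ ih => exact hconj.hbar_diff _ ▸ ih.compl

end IsConjugacy

theorem conjugacy_restricts_and_boolean_iso {A₁ A₂ : Type*}
    (F₁ : Set (List A₁)) (F₂ : Set (List A₂))
    (h : ↥(OTW F₁) ≃ₜ ↥(OTW F₂)) (hconj : IsConjugacy F₁ F₂ h) :
    (∀ y : ↥(OTW F₁), (y : ℕ → Option A₁) ∈ ofSeq '' SubshiftOf F₁ ↔
        (h y : ℕ → Option A₂) ∈ ofSeq '' SubshiftOf F₂) ∧
    (∀ S : Set (ℕ → A₁), InU F₁ S → InU F₂ (hbar F₁ F₂ ⇑h S)) ∧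
    (∀ S T : Set (ℕ → A₁), InU F₁ S → InU F₁ T →
      hbar F₁ F₂ ⇑h (S ∪ T) = hbar F₁ F₂ ⇑h S ∪ hbar F₁ F₂ ⇑h T ∧
      hbar F₁ F₂ ⇑h (S ∩ T) = hbar F₁ F₂ ⇑h S ∩ hbar F₁ F₂ ⇑h T ∧
      hbar F₁ F₂ ⇑h (SubshiftOf F₁ \ S) = SubshiftOf F₂ \ hbar F₁ F₂ ⇑h S) ∧
    ∀ T : Set (ℕ → A₂), InU F₂ T →
      ∃! S : Set (ℕ → A₁), InU F₁ S ∧ hbar F₁ F₂ ⇑h S = T := by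
  refine ⟨fun y => (hconj.apply_mem_image_ofSeq_iff y).symm, fun _ => hconj.inU_hbar,
    fun S T _ _ => ⟨hconj.hbar_union S T, hconj.hbar_inter S T, hconj.hbar_diff S⟩,
    fun T hT => ⟨hbar F₂ F₁ h.symm T, ⟨hconj.symm.inU_hbar hT, ?_⟩, ?_⟩⟩
  · exact hconj.hbar_hbar_symm hT.subset_subshiftOf
  · rintro S ⟨hS, rfl⟩
    exact hconj.hbar_injOn hS.subset_subshiftOf (hconj.symm.inU_hbar hT).subset_subshiftOf
      (hconj.hbar_hbar_symm hT.subset_subshiftOf).symm
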